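/- (Single-group case: proximal operator of the ℓ∞-norm via ℓ₁-ball projection.) Let η > 0 and λ > 0. For every u ∈ ℝ^p, the unique minimizer of w ↦ ½‖u−w‖₂² + λη·max_{j∈[p]}|w_j| over ℝ^p equals u − P(u), where P(u) is the (unique) Euclidean projection of u onto the ℓ₁-ball {v ∈ ℝ^p : ‖v‖₁ ≤ λη}. -/
import Mathlib


/-- Objective ½‖u−w‖₂² + c·max_j |w_j| of the single-group proximal problem. -/
noncomputable def linfProxObj (p : ℕ) (c : ℝ) (u w : Fin p → ℝ) : ℝ :=
  (1 / 2) * ∑ j, (u j - w j) ^ 2 + c * ⨆ j, |w j|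

/-- Variational inequality for the projection onto the ℓ₁-ball. -/
lemma l1proj_vi (p : ℕ) (c : ℝ) (hc : 0 < c) (u P : Fin p → ℝ)
    (hPmem : ∑ j, |P j| ≤ c)
    (hPproj : ∀ v : Fin p → ℝ, (∑ j, |v j| ≤ c) →
      ∑ j, (u j - P j) ^ 2 ≤ ∑ j, (u j - v j) ^ 2)
    (v : Fin p → ℝ) (hv : ∑ j, |v j| ≤ c) :
    ∑ j, (u j - P j) * (v j - P j) ≤ 0 := by
  by_contra hcon
  push_neg at hcon
  set s : ℝ := ∑ j, (u j - P j) * (v j - P j) with hs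
  set Q : ℝ := ∑ j, (v j - P j) ^ 2 with hQ
  have hQ0 : 0 ≤ Q := Finset.sum_nonneg fun j _ => sq_nonneg _
  have hQpos : 0 < Q := by
    rcases lt_or_eq_of_le hQ0 with h | h
    · exact h
    · exfalso
      have hall : ∀ j ∈ Finset.univ, (v j - P j) ^ 2 = 0 := by
        intro j _
        have := (Finset.sum_eq_zero_iff_of_nonneg (fun j _ => sq_nonneg (v j - P j))).1 h.symm
        exact this j (Finset.mem_univ j)
      have : s = 0 := by
        apply Finset.sum_eq_zero
        intro j _
        have := hall j (Finset.mem_univ j)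
        have hz : v j - P j = 0 := by nlinarith [sq_nonneg (v j - P j)]
        rw [hz]; ring
      linarith
  set t : ℝ := min 1 (s / Q) with ht
  have htpos : 0 < t := lt_min one_pos (div_pos hcon hQpos)
  have ht1 : t ≤ 1 := min_le_left _ _
  have htsQ : t ≤ s / Q := min_le_right _ _
  set vt : Fin p → ℝ := fun j => P j + t * (v j - P j) with hvt
  have hvtmem : ∑ j, |vt j| ≤ c := by
    have hb : ∀ j, |vt j| ≤ (1 - t) * |P j| + t * |v j| := by
      intro j
      have : vt j = (1 - t) * P j + t * v j := by simp [hvt]; ring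
      rw [this]
      calc |(1 - t) * P j + t * v j| ≤ |(1 - t) * P j| + |t * v j| := abs_add_le _ _
        _ = (1 - t) * |P j| + t * |v j| := by
            rw [abs_mul, abs_mul, abs_of_nonneg (by linarith : (0:ℝ) ≤ 1 - t),
              abs_of_nonneg htpos.le]
    calc ∑ j, |vt j| ≤ ∑ j, ((1 - t) * |P j| + t * |v j|) :=
          Finset.sum_le_sum fun j _ => hb j
      _ = (1 - t) * ∑ j, |P j| + t * ∑ j, |v j| := by
          rw [Finset.sum_add_distrib, Finset.mul_sum, Finset.mul_sum]
      _ ≤ (1 - t) * c + t * c := by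
          have h1 : (0:ℝ) ≤ 1 - t := by linarith
          exact add_le_add (mul_le_mul_of_nonneg_left hPmem h1)
            (mul_le_mul_of_nonneg_left hv htpos.le)
      _ = c := by ring
  have hexp : ∑ j, (u j - vt j) ^ 2
      = ∑ j, (u j - P j) ^ 2 - 2 * t * s + t ^ 2 * Q := by
    have : ∀ j ∈ Finset.univ, (u j - vt j) ^ 2
        = (u j - P j) ^ 2 - 2 * t * ((u j - P j) * (v j - P j))
          + t ^ 2 * (v j - P j) ^ 2 := by
      intro j _; simp only [hvt]; ring
    rw [Finset.sum_congr rfl this, Finset.sum_add_distrib, Finset.sum_sub_distrib,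
      ← Finset.mul_sum, ← Finset.mul_sum]
  have hkey := hPproj vt hvtmem
  rw [hexp] at hkey
  have h2s : 2 * s ≤ t * Q := by
    have : 0 ≤ -2 * t * s + t ^ 2 * Q := by linarith
    nlinarith
  have : t * Q ≤ s := by
    calc t * Q ≤ (s / Q) * Q := mul_le_mul_of_nonneg_right htsQ hQ0
      _ = s := by field_simp
  linarith

/-- single-group case. The unique minimizer of
    w ↦ ½‖u−w‖₂² + λη·max_j |w_j| is u − P(u), where P(u) is the Euclidean
    projection of u onto the ℓ₁-ball of radius λη. -/
theorem prox_linf_eq_sub_l1_projection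
    (p : ℕ) (hp : 1 ≤ p) (η lam : ℝ) (hη : 0 < η) (hlam : 0 < lam)
    (u P : Fin p → ℝ)
    (hPmem : ∑ j, |P j| ≤ lam * η)
    (hPproj : ∀ v : Fin p → ℝ, (∑ j, |v j| ≤ lam * η) →
      ∑ j, (u j - P j) ^ 2 ≤ ∑ j, (u j - v j) ^ 2) :
    (∀ w : Fin p → ℝ,
      linfProxObj p (lam * η) u (fun j => u j - P j) ≤ linfProxObj p (lam * η) u w) ∧
    (∀ w : Fin p → ℝ,
      (∀ w', linfProxObj p (lam * η) u w ≤ linfProxObj p (lam * η) u w') →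
      w = fun j => u j - P j) := by
  have hc : 0 < lam * η := mul_pos hlam hη
  set c := lam * η with hcdef
  have hne : Nonempty (Fin p) := ⟨⟨0, hp⟩⟩
  have hvi := l1proj_vi p c hc u P hPmem hPproj
  -- 0 ≤ ⟨u-P, P⟩
  have hB : 0 ≤ ∑ j, (u j - P j) * P j := by
    have h0 := hvi (fun _ => 0) (by simpa using hc.le)
    simp only [zero_sub] at h0
    have : ∑ j, (u j - P j) * -P j = -∑ j, (u j - P j) * P j := by
      rw [← Finset.sum_neg_distrib]; apply Finset.sum_congr rfl; intro j _; ring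
    rw [this] at h0
    linarith
  -- the sup of |u j - P j|
  have bddq : BddAbove (Set.range fun j => |u j - P j|) := (Set.finite_range _).bddAbove
  have hC : c * (⨆ j, |u j - P j|) ≤ ∑ j, (u j - P j) * P j := by
    obtain ⟨j₀, hj₀⟩ := Finite.exists_max (fun j => |u j - P j|)
    have hMeq : (⨆ j, |u j - P j|) = |u j₀ - P j₀| :=
      le_antisymm (ciSup_le hj₀) (le_ciSup bddq j₀)
    rw [hMeq]
    rcases eq_or_lt_of_le (abs_nonneg (u j₀ - P j₀)) with h0 | hMpos
    · rw [← h0, mul_zero]; exact hB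
    · set M := |u j₀ - P j₀| with hM
      set v : Fin p → ℝ := fun j => if j = j₀ then c * (u j₀ - P j₀) / M else 0 with hv
      have hvmem : ∑ j, |v j| ≤ c := by
        have : ∑ j, |v j| = |c * (u j₀ - P j₀) / M| := by
          rw [hv]
          rw [show (∑ j, |if j = j₀ then c * (u j₀ - P j₀) / M else 0|)
            = ∑ j, if j = j₀ then |c * (u j₀ - P j₀) / M| else 0 from
            Finset.sum_congr rfl fun j _ => by split <;> simp]
          simp
        rw [this, abs_div, abs_mul, abs_of_pos hc, abs_abs, ← hM]
        rw [mul_div_assoc, div_self hMpos.ne', mul_one]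
      have h := hvi v hvmem
      have hsplit : ∑ j, (u j - P j) * (v j - P j)
          = ∑ j, (u j - P j) * v j - ∑ j, (u j - P j) * P j := by
        rw [← Finset.sum_sub_distrib]; apply Finset.sum_congr rfl; intro j _; ring
      have hvsum : ∑ j, (u j - P j) * v j = c * M := by
        rw [hv]
        rw [show (∑ j, (u j - P j) * if j = j₀ then c * (u j₀ - P j₀) / M else 0)
          = ∑ j, if j = j₀ then (u j₀ - P j₀) * (c * (u j₀ - P j₀) / M) else 0 from
          Finset.sum_congr rfl fun j _ => by split <;> simp_all]
        simp only [Finset.sum_ite_eq', Finset.mem_univ, if_true]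
        have hsq : (u j₀ - P j₀) * (u j₀ - P j₀) = M * M := by
          rw [hM, ← abs_mul_abs_self]
        field_simp
        nlinarith
      rw [hsplit, hvsum] at h
      linarith
  -- key inequality
  have key : ∀ w : Fin p → ℝ,
      linfProxObj p c u (fun j => u j - P j) + (1/2) * ∑ j, (w j - (u j - P j)) ^ 2
        ≤ linfProxObj p c u w := by
    intro w
    have bddw : BddAbove (Set.range fun j => |w j|) := (Set.finite_range _).bddAbove
    set Mw := ⨆ j, |w j| with hMw
    have hMw0 : 0 ≤ Mw := le_trans (abs_nonneg _) (le_ciSup bddw ⟨0, hp⟩)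
    have hwle : ∀ j, |w j| ≤ Mw := fun j => le_ciSup bddw j
    -- ⟨P, w⟩ ≤ c * Mw
    have hPw : ∑ j, P j * w j ≤ c * Mw := by
      calc ∑ j, P j * w j ≤ ∑ j, |P j| * Mw := by
            apply Finset.sum_le_sum
            intro j _
            calc P j * w j ≤ |P j * w j| := le_abs_self _
              _ = |P j| * |w j| := abs_mul _ _
              _ ≤ |P j| * Mw := mul_le_mul_of_nonneg_left (hwle j) (abs_nonneg _)
        _ = (∑ j, |P j|) * Mw := by rw [← Finset.sum_mul]
        _ ≤ c * Mw := mul_le_mul_of_nonneg_right hPmem hMw0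
    -- expand the quadratic
    have hexp : ∑ j, (u j - w j) ^ 2
        = ∑ j, (P j) ^ 2 + 2 * (∑ j, P j * (u j - P j) - ∑ j, P j * w j)
          + ∑ j, (w j - (u j - P j)) ^ 2 := by
      have : ∀ j ∈ Finset.univ, (u j - w j) ^ 2
          = (P j) ^ 2 + 2 * (P j * (u j - P j) - P j * w j)
            + (w j - (u j - P j)) ^ 2 := by intro j _; ring
      rw [Finset.sum_congr rfl this, Finset.sum_add_distrib, Finset.sum_add_distrib,
        ← Finset.mul_sum, Finset.sum_sub_distrib]
    have hobj1 : linfProxObj p c u (fun j => u j - P j)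
        = (1/2) * ∑ j, (P j) ^ 2 + c * ⨆ j, |u j - P j| := by
      unfold linfProxObj
      congr 1
      congr 1
      apply Finset.sum_congr rfl
      intro j _; ring_nf
    have hPq : ∑ j, P j * (u j - P j) = ∑ j, (u j - P j) * P j := by
      apply Finset.sum_congr rfl; intro j _; ring
    rw [hobj1]
    unfold linfProxObj
    rw [hexp, hPq]
    have := hC
    have := hPw
    set A := ∑ j, (P j)^2
    set B := ∑ j, (w j - (u j - P j))^2
    set D := ∑ j, (u j - P j) * P j
    set E := ∑ j, P j * w j
    set Mq := ⨆ j, |u j - P j|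
    -- goal: 1/2*A + c*Mq + 1/2*B ≤ 1/2*(A + 2*(D - E) + B) + c*Mw
    linarith
  constructor
  · intro w
    have h := key w
    have hB2 : 0 ≤ ∑ j, (w j - (u j - P j)) ^ 2 := Finset.sum_nonneg fun j _ => sq_nonneg _
    linarith
  · intro w hmin
    have h1 := key w
    have h2 := hmin (fun j => u j - P j)
    have hB2 : ∑ j, (w j - (u j - P j)) ^ 2 ≤ 0 := by linarith
    funext j
    have hall := (Finset.sum_eq_zero_iff_of_nonneg
      (fun j (_ : j ∈ Finset.univ) => sq_nonneg (w j - (u j - P j)))).1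
      (le_antisymm hB2 (Finset.sum_nonneg fun j _ => sq_nonneg _))
    have := hall j (Finset.mem_univ j)
    nlinarith [sq_nonneg (w j - (u j - P j)), this]
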